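/- The infinite-horizon optimal cost equals the infimum of the finite-horizon costs: μ_∞(x₀) = inf_{T>0} μ_T(x₀), where μ_∞(x₀) = inf{∫₀^∞ |u| dt : u ∈ 𝒰_∞, x(t;u) → 0 as t → ∞}. -/

import Mathlib

open MeasureTheory Set Filter Matrix

/-- Matrix exponential. -/
noncomputable def mexp {n : ℕ} (M : Matrix (Fin n) (Fin n) ℝ) : Matrix (Fin n) (Fin n) ℝ :=
  NormedSpace.exp M

/-- Euclidean norm on `ℝ^m`. -/
noncomputable def eNorm {m : ℕ} (v : Fin m → ℝ) : ℝ := Real.sqrt (∑ i, v i ^ 2)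

/-- Admissible controls: measurable, with values in the closed Euclidean unit ball. -/
def Admissible {m : ℕ} (u : ℝ → Fin m → ℝ) : Prop :=
  Measurable u ∧ ∀ t, eNorm (u t) ≤ 1

/-- Kalman rank condition. -/
def Kalman {n m : ℕ} (A : Matrix (Fin n) (Fin n) ℝ) (B : Matrix (Fin n) (Fin m) ℝ) : Prop :=
  Submodule.span ℝ {x : Fin n → ℝ | ∃ i < n, ∃ v : Fin m → ℝ, x = (A ^ i) *ᵥ (B *ᵥ v)} = ⊤

/-- The attainable set `𝒜_T`. -/
noncomputable def attain {n m : ℕ} (A : Matrix (Fin n) (Fin n) ℝ)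
    (B : Matrix (Fin n) (Fin m) ℝ) (T : ℝ) : Set (Fin n → ℝ) :=
  {x | ∃ u : ℝ → Fin m → ℝ, Admissible u ∧
    x = ∫ t in Ioc (0:ℝ) T, mexp (-(t • A)) *ᵥ (B *ᵥ u t)}

/-- `u` steers `x₀` to the origin in time `T`. -/
noncomputable def Steers {n m : ℕ} (A : Matrix (Fin n) (Fin n) ℝ)
    (B : Matrix (Fin n) (Fin m) ℝ) (x₀ : Fin n → ℝ) (T : ℝ) (u : ℝ → Fin m → ℝ) : Prop :=
  x₀ + ∫ t in Ioc (0:ℝ) T, mexp (-(t • A)) *ᵥ (B *ᵥ u t) = 0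

/-- The `L¹` cost of a control on `[0,T]`. -/
noncomputable def costJ {m : ℕ} (T : ℝ) (u : ℝ → Fin m → ℝ) : ℝ :=
  ∫ t in Ioc (0:ℝ) T, eNorm (u t)

/-- Finite-horizon optimal cost `μ_T(x₀)`. -/
noncomputable def muT {n m : ℕ} (A : Matrix (Fin n) (Fin n) ℝ)
    (B : Matrix (Fin n) (Fin m) ℝ) (T : ℝ) (x₀ : Fin n → ℝ) : ℝ :=
  sInf {c | ∃ u : ℝ → Fin m → ℝ, Admissible u ∧ Steers A B x₀ T u ∧ c = costJ T u}

/-- Trajectory of the system from `x₀` with control `u`. -/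
noncomputable def traj {n m : ℕ} (A : Matrix (Fin n) (Fin n) ℝ)
    (B : Matrix (Fin n) (Fin m) ℝ) (x₀ : Fin n → ℝ) (u : ℝ → Fin m → ℝ) (t : ℝ) :
    Fin n → ℝ :=
  mexp (t • A) *ᵥ (x₀ + ∫ τ in Ioc (0:ℝ) t, mexp (-(τ • A)) *ᵥ (B *ᵥ u τ))

/-- Infinite-horizon optimal cost `μ_∞(x₀)`. -/
noncomputable def muInf {n m : ℕ} (A : Matrix (Fin n) (Fin n) ℝ)
    (B : Matrix (Fin n) (Fin m) ℝ) (x₀ : Fin n → ℝ) : ℝ :=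
  sInf {c | ∃ u : ℝ → Fin m → ℝ, Admissible u ∧
    IntegrableOn (fun t => eNorm (u t)) (Ioi (0:ℝ)) ∧
    Tendsto (traj A B x₀ u) atTop (nhds 0) ∧
    c = ∫ t in Ioi (0:ℝ), eNorm (u t)}

namespace Stmt13Aux

variable {n m : ℕ}

lemma mexp_hasDeriv (M : Matrix (Fin n) (Fin n) ℝ) (z c : Fin n → ℝ) (τ : ℝ) :
    HasDerivAt (fun s : ℝ => z ⬝ᵥ (mexp (s • M) *ᵥ c)) (z ⬝ᵥ ((mexp (τ • M) * M) *ᵥ c)) τ := by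
  letI : SeminormedRing (Matrix (Fin n) (Fin n) ℝ) := Matrix.linftyOpSemiNormedRing
  letI : NormedRing (Matrix (Fin n) (Fin n) ℝ) := Matrix.linftyOpNormedRing
  letI : NormedAlgebra ℝ (Matrix (Fin n) (Fin n) ℝ) := Matrix.linftyOpNormedAlgebra
  have hd := hasDerivAt_exp_smul_const (𝕂 := ℝ) M τ
  let L : Matrix (Fin n) (Fin n) ℝ →ₗ[ℝ] ℝ :=
    { toFun := fun P => z ⬝ᵥ (P *ᵥ c)
      map_add' := fun P Q => by simp [Matrix.add_mulVec, dotProduct_add]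
      map_smul' := fun r P => by simp [Matrix.smul_mulVec, dotProduct_smul] }
  have h2 := (L.toContinuousLinearMap.hasFDerivAt.comp_hasDerivAt τ hd)
  exact h2

lemma mexp_add (M : Matrix (Fin n) (Fin n) ℝ) (s t : ℝ) :
    mexp ((s + t) • M) = mexp (s • M) * mexp (t • M) := by
  rw [add_smul]
  exact Matrix.exp_add_of_commute _ _ (((Commute.refl M).smul_left s).smul_right t)

lemma mexp_zero_eq : mexp (0 : Matrix (Fin n) (Fin n) ℝ) = 1 := by
  letI : SeminormedRing (Matrix (Fin n) (Fin n) ℝ) := Matrix.linftyOpSemiNormedRing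
  letI : NormedRing (Matrix (Fin n) (Fin n) ℝ) := Matrix.linftyOpNormedRing
  letI : NormedAlgebra ℝ (Matrix (Fin n) (Fin n) ℝ) := Matrix.linftyOpNormedAlgebra
  exact NormedSpace.exp_zero (𝔸 := Matrix (Fin n) (Fin n) ℝ)

lemma mexp_neg_mul (M : Matrix (Fin n) (Fin n) ℝ) (t : ℝ) :
    mexp (-(t • M)) * mexp (t • M) = 1 := by
  have h := Matrix.exp_add_of_commute (-(t • M)) (t • M)
    ((Commute.refl (t • M)).neg_left)
  rw [neg_add_cancel] at h
  show NormedSpace.exp (-(t • M)) * NormedSpace.exp (t • M) = 1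
  rw [← h]
  exact mexp_zero_eq

lemma mexp_cancel (M : Matrix (Fin n) (Fin n) ℝ) (t : ℝ) (w : Fin n → ℝ) :
    mexp (-(t • M)) *ᵥ (mexp (t • M) *ᵥ w) = w := by
  rw [Matrix.mulVec_mulVec, mexp_neg_mul, Matrix.one_mulVec]

lemma continuous_dot_mexp (M : Matrix (Fin n) (Fin n) ℝ) (z c : Fin n → ℝ) :
    Continuous fun t : ℝ => z ⬝ᵥ (mexp (t • M) *ᵥ c) :=
  continuous_iff_continuousAt.2 fun τ => (mexp_hasDeriv M z c τ).continuousAt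

lemma continuous_mexp_entry (M : Matrix (Fin n) (Fin n) ℝ) (i j : Fin n) :
    Continuous fun t : ℝ => mexp (t • M) i j := by
  have h := continuous_dot_mexp M (Pi.single i 1) (Pi.single j 1)
  have he : ∀ t : ℝ, (Pi.single i (1:ℝ)) ⬝ᵥ (mexp (t • M) *ᵥ Pi.single j 1)
      = mexp (t • M) i j := by
    intro t
    simp [single_dotProduct, Matrix.mulVec_single]
  simpa only [he] using h

lemma integrableOn_of_bound {E : Type*} [NormedAddCommGroup E] {f : ℝ → E} {s : Set ℝ}
    (hs : MeasurableSet s) (hμ : volume s < ⊤)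
    (hf : AEStronglyMeasurable f (volume.restrict s)) (C : ℝ)
    (hC : ∀ t ∈ s, ‖f t‖ ≤ C) : IntegrableOn f s := by
  have : IsFiniteMeasure (volume.restrict s) := ⟨by rwa [Measure.restrict_apply_univ]⟩
  exact Integrable.mono' (integrable_const C) hf ((ae_restrict_iff' hs).2 (.of_forall hC))

lemma integral_component {k : ℕ} {f : ℝ → Fin k → ℝ} {μ : Measure ℝ} (hf : Integrable f μ)
    (i : Fin k) : (∫ t, f t ∂μ) i = ∫ t, f t i ∂μ :=
  ((ContinuousLinearMap.proj (R := ℝ) (φ := fun _ : Fin k => ℝ) i).integral_comp_comm hf).symm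

lemma mulVec_integral {k l : ℕ} (C : Matrix (Fin l) (Fin k) ℝ) {f : ℝ → Fin k → ℝ}
    {μ : Measure ℝ} (hf : Integrable f μ) : C *ᵥ (∫ t, f t ∂μ) = ∫ t, C *ᵥ f t ∂μ := by
  have h := (LinearMap.toContinuousLinearMap C.mulVecLin).integral_comp_comm hf
  simpa using h.symm

lemma dot_integral {k : ℕ} (z : Fin k → ℝ) {f : ℝ → Fin k → ℝ} {μ : Measure ℝ}
    (hf : Integrable f μ) : z ⬝ᵥ (∫ t, f t ∂μ) = ∫ t, z ⬝ᵥ f t ∂μ := by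
  let L : (Fin k → ℝ) →ₗ[ℝ] ℝ :=
    { toFun := fun v => z ⬝ᵥ v
      map_add' := fun a b => dotProduct_add z a b
      map_smul' := fun r a => by simp [dotProduct_smul] }
  have h := (LinearMap.toContinuousLinearMap L).integral_comp_comm hf
  simpa [L] using h.symm

/-! ### The Gramian -/

variable (A : Matrix (Fin n) (Fin n) ℝ) (B : Matrix (Fin n) (Fin m) ℝ)

/-- `M t = e^{-tA} B`. -/
noncomputable def Mt (t : ℝ) : Matrix (Fin n) (Fin m) ℝ := mexp (t • (-A)) * B

lemma continuous_Mt_entry (i : Fin n) (j : Fin m) : Continuous fun t => Mt A B t i j := by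
  simp only [Mt, Matrix.mul_apply]
  exact continuous_finset_sum _ fun x _ => (continuous_mexp_entry (-A) i x).mul continuous_const

lemma continuous_Q_entry (i j : Fin n) :
    Continuous fun t => (Mt A B t * (Mt A B t)ᵀ) i j := by
  simp only [Matrix.mul_apply, Matrix.transpose_apply]
  exact continuous_finset_sum _ fun x _ =>
    (continuous_Mt_entry A B i x).mul (continuous_Mt_entry A B j x)

lemma continuous_Qy (y : Fin n → ℝ) :
    Continuous fun t => (Mt A B t * (Mt A B t)ᵀ) *ᵥ y := by
  refine continuous_pi fun i => ?_
  simp only [Matrix.mulVec, dotProduct]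
  exact continuous_finset_sum _ fun j _ => (continuous_Q_entry A B i j).mul continuous_const

lemma continuous_MtT_z (z : Fin n → ℝ) :
    Continuous fun t => (Mt A B t)ᵀ *ᵥ z := by
  refine continuous_pi fun j => ?_
  simp only [Matrix.mulVec, dotProduct, Matrix.transpose_apply]
  exact continuous_finset_sum _ fun i _ => (continuous_Mt_entry A B i j).mul continuous_const

/-- Controllability Gramian on `[0,1]`. -/
noncomputable def Gram : Matrix (Fin n) (Fin n) ℝ :=
  Matrix.of fun i j => ∫ t in Ioc (0:ℝ) 1, (Mt A B t * (Mt A B t)ᵀ) i j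

lemma Gram_mulVec (y : Fin n → ℝ) :
    Gram A B *ᵥ y = ∫ t in Ioc (0:ℝ) 1, (Mt A B t * (Mt A B t)ᵀ) *ᵥ y := by
  funext i
  rw [integral_component ((continuous_Qy A B y).integrableOn_Ioc) i]
  simp only [Matrix.mulVec, dotProduct, Gram, Matrix.of_apply]
  calc ∑ x, (∫ t in Ioc (0:ℝ) 1, (Mt A B t * (Mt A B t)ᵀ) i x) * y x
      = ∑ x, ∫ t in Ioc (0:ℝ) 1, (Mt A B t * (Mt A B t)ᵀ) i x * y x :=
        Finset.sum_congr rfl fun x _ => (integral_mul_const _ _).symm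
    _ = ∫ t in Ioc (0:ℝ) 1, ∑ x, (Mt A B t * (Mt A B t)ᵀ) i x * y x :=
        (integral_finset_sum _ fun j _ =>
          ((continuous_Q_entry A B i j).mul continuous_const).integrableOn_Ioc).symm


lemma zero_on_Ioo {f : ℝ → ℝ} (hfc : Continuous f) (hfnn : ∀ t, 0 ≤ f t)
    (hint : ∫ t in Ioc (0:ℝ) 1, f t = 0) : ∀ t ∈ Ioo (0:ℝ) 1, f t = 0 := by
  have hfi : IntegrableOn f (Ioc (0:ℝ) 1) := hfc.integrableOn_Ioc
  have hae0 : f =ᵐ[volume.restrict (Ioc (0:ℝ) 1)] 0 :=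
    (integral_eq_zero_iff_of_nonneg (fun t => hfnn t) hfi).mp hint
  have hms : MeasurableSet {t : ℝ | f t ≠ 0} :=
    (measurableSet_singleton (0:ℝ)).compl.preimage hfc.measurable
  have hnull : volume ({t : ℝ | f t ≠ 0} ∩ Ioc (0:ℝ) 1) = 0 := by
    have h := ae_iff.mp hae0
    simp only [Pi.zero_apply] at h
    rwa [Measure.restrict_apply hms] at h
  intro t ht
  by_contra hft
  have hopen : IsOpen {t : ℝ | f t ≠ 0} := isOpen_compl_singleton.preimage hfc
  obtain ⟨δ, hδ, hball⟩ := Metric.isOpen_iff.mp hopen t hft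
  set a := max (t - δ) 0 with ha
  set b := min (t + δ) 1 with hb
  have hab : a < t ∧ t < b := ⟨max_lt (by linarith) ht.1, lt_min (by linarith) ht.2⟩
  have hsub : Ioo a b ⊆ {t : ℝ | f t ≠ 0} ∩ Ioc (0:ℝ) 1 := by
    intro x hx
    constructor
    · apply hball
      rw [Real.ball_eq_Ioo]
      exact Ioo_subset_Ioo (le_max_left _ _) (min_le_left _ _) hx
    · exact ⟨lt_of_le_of_lt (le_max_right _ _) hx.1, le_trans (le_of_lt hx.2) (min_le_right _ _)⟩
  have h0 : volume (Ioo a b) = 0 := measure_mono_null hsub hnull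
  rw [Real.volume_Ioo, ENNReal.ofReal_eq_zero] at h0
  linarith [hab.1, hab.2]

lemma gram_inj
    (hK : Submodule.span ℝ {x : Fin n → ℝ | ∃ i < n, ∃ v : Fin m → ℝ, x = (A ^ i) *ᵥ (B *ᵥ v)} = ⊤)
    {z : Fin n → ℝ} (hz : Gram A B *ᵥ z = 0) : z = 0 := by
  set f : ℝ → ℝ := fun t => ((Mt A B t)ᵀ *ᵥ z) ⬝ᵥ ((Mt A B t)ᵀ *ᵥ z) with hf
  have hfc : Continuous f := by
    unfold f
    simp only [dotProduct]
    refine continuous_finset_sum _ fun j _ => ?_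
    have h := (continuous_MtT_z A B z)
    exact ((continuous_apply j).comp h).mul ((continuous_apply j).comp h)
  have hfnn : ∀ t, 0 ≤ f t := fun t => Finset.sum_nonneg fun j _ => mul_self_nonneg _
  have hpt : ∀ t, z ⬝ᵥ ((Mt A B t * (Mt A B t)ᵀ) *ᵥ z) = f t := fun t => by
    rw [← Matrix.mulVec_mulVec, Matrix.dotProduct_mulVec, ← Matrix.mulVec_transpose]
  have hint : ∫ t in Ioc (0:ℝ) 1, f t = 0 := by
    have h1 : z ⬝ᵥ (Gram A B *ᵥ z) = 0 := by rw [hz, dotProduct_zero]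
    rw [Gram_mulVec, dot_integral z ((continuous_Qy A B z).integrableOn_Ioc)] at h1
    calc ∫ t in Ioc (0:ℝ) 1, f t
        = ∫ t in Ioc (0:ℝ) 1, z ⬝ᵥ ((Mt A B t * (Mt A B t)ᵀ) *ᵥ z) :=
          setIntegral_congr_fun measurableSet_Ioc fun t _ => (hpt t).symm
      _ = 0 := h1
  have hM : ∀ t ∈ Ioo (0:ℝ) 1, (Mt A B t)ᵀ *ᵥ z = 0 := by
    intro t ht
    have h := zero_on_Ioo hfc hfnn hint t ht
    exact dotProduct_self_eq_zero.mp h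
  have key : ∀ (k : ℕ) (w : Fin m → ℝ), ∀ t ∈ Ioo (0:ℝ) 1,
      z ⬝ᵥ (mexp (t • (-A)) *ᵥ ((A ^ k) *ᵥ (B *ᵥ w))) = 0 := by
    intro k
    induction k with
    | zero =>
      intro w t ht
      have h0 := hM t ht
      have heq : z ⬝ᵥ (mexp (t • (-A)) *ᵥ ((A ^ 0) *ᵥ (B *ᵥ w)))
          = ((Mt A B t)ᵀ *ᵥ z) ⬝ᵥ w := by
        rw [pow_zero, Matrix.one_mulVec]
        rw [show mexp (t • (-A)) *ᵥ (B *ᵥ w) = Mt A B t *ᵥ w from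
          by rw [Mt, ← Matrix.mulVec_mulVec]]
        rw [Matrix.dotProduct_mulVec, ← Matrix.mulVec_transpose]
      rw [heq, h0, zero_dotProduct]
    | succ k ih =>
      intro w t ht
      set c := (A ^ k) *ᵥ (B *ᵥ w) with hc
      have hder := mexp_hasDeriv (-A) z c t
      have hloc : (fun s => z ⬝ᵥ (mexp (s • (-A)) *ᵥ c)) =ᶠ[nhds t] (fun _ => (0:ℝ)) := by
        filter_upwards [Ioo_mem_nhds ht.1 ht.2] with s hs using ih w s hs
      have hzero : HasDerivAt (fun s => z ⬝ᵥ (mexp (s • (-A)) *ᵥ c)) 0 t :=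
        (hasDerivAt_const t (0:ℝ)).congr_of_eventuallyEq hloc
      have huniq : z ⬝ᵥ ((mexp (t • (-A)) * (-A)) *ᵥ c) = 0 := hder.unique hzero
      have hAc : A *ᵥ c = (A ^ (k+1)) *ᵥ (B *ᵥ w) := by
        rw [hc, Matrix.mulVec_mulVec, ← pow_succ']
      have htrans : (mexp (t • (-A)) * (-A)) *ᵥ c
          = -(mexp (t • (-A)) *ᵥ ((A ^ (k+1)) *ᵥ (B *ᵥ w))) := by
        rw [← Matrix.mulVec_mulVec, Matrix.neg_mulVec, Matrix.mulVec_neg, hAc]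
      rw [htrans, dotProduct_neg, neg_eq_zero] at huniq
      exact huniq
  set y := (mexp ((1/2 : ℝ) • (-A)))ᵀ *ᵥ z with hy
  have hy0 : y = 0 := by
    have hgen : ∀ x ∈ {x : Fin n → ℝ | ∃ i < n, ∃ v : Fin m → ℝ, x = (A ^ i) *ᵥ (B *ᵥ v)},
        y ⬝ᵥ x = 0 := by
      rintro x ⟨i, hi, v, rfl⟩
      have h := key i v (1/2) (by norm_num)
      rw [hy, Matrix.mulVec_transpose, ← Matrix.dotProduct_mulVec]
      exact h
    have hall : ∀ x : Fin n → ℝ, y ⬝ᵥ x = 0 := by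
      intro x
      have hx : x ∈ Submodule.span ℝ
          {x : Fin n → ℝ | ∃ i < n, ∃ v : Fin m → ℝ, x = (A ^ i) *ᵥ (B *ᵥ v)} := by
        rw [hK]; trivial
      refine Submodule.span_induction (fun a ha => hgen a ha) (by simp) ?_ ?_ hx
      · intro a b _ _ h1 h2
        rw [dotProduct_add, h1, h2, add_zero]
      · intro r a _ h1
        rw [dotProduct_smul, h1, smul_zero]
    exact dotProduct_self_eq_zero.mp (hall y)
  have hz2 : (mexp ((1/2 : ℝ) • A))ᵀ *ᵥ y = z := by
    rw [hy, Matrix.mulVec_mulVec, ← Matrix.transpose_mul]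
    have : mexp ((1/2 : ℝ) • (-A)) * mexp ((1/2 : ℝ) • A) = 1 := by
      have := mexp_neg_mul A (1/2 : ℝ)
      rwa [show -((1/2 : ℝ) • A) = (1/2 : ℝ) • (-A) from (smul_neg _ _).symm] at this
    rw [this, Matrix.transpose_one, Matrix.one_mulVec]
  rw [← hz2, hy0, Matrix.mulVec_zero]


lemma eNorm_nonneg {k : ℕ} (v : Fin k → ℝ) : 0 ≤ eNorm v := Real.sqrt_nonneg _

lemma abs_le_eNorm {k : ℕ} (v : Fin k → ℝ) (i : Fin k) : |v i| ≤ eNorm v := by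
  rw [eNorm, ← Real.sqrt_sq_eq_abs]
  exact Real.sqrt_le_sqrt (Finset.single_le_sum (f := fun j => v j ^ 2)
    (fun j _ => sq_nonneg _) (Finset.mem_univ i))

lemma eNorm_le_sum {k : ℕ} (v : Fin k → ℝ) : eNorm v ≤ ∑ i, |v i| := by
  rw [eNorm]
  have h1 : ∑ i, v i ^ 2 ≤ (∑ i, |v i|) ^ 2 := by
    calc ∑ i, v i ^ 2 = ∑ i, |v i| ^ 2 := by simp [sq_abs]
      _ ≤ (∑ i, |v i|) ^ 2 := Finset.sum_sq_le_sq_sum_of_nonneg (fun i _ => abs_nonneg _)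
  calc Real.sqrt (∑ i, v i ^ 2) ≤ Real.sqrt ((∑ i, |v i|) ^ 2) := Real.sqrt_le_sqrt h1
    _ = ∑ i, |v i| := Real.sqrt_sq (Finset.sum_nonneg fun i _ => abs_nonneg _)

lemma norm_le_eNorm {k : ℕ} (z : Fin k → ℝ) : ‖z‖ ≤ eNorm z :=
  (pi_norm_le_iff_of_nonneg (eNorm_nonneg z)).mpr fun i => by
    rw [Real.norm_eq_abs]; exact abs_le_eNorm z i

lemma continuous_eNorm {k : ℕ} : Continuous (eNorm (m := k)) := by
  unfold eNorm
  exact Real.continuous_sqrt.comp (continuous_finset_sum _ fun i _ => (continuous_apply i).pow 2)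

lemma steer_aux
    (hK : Submodule.span ℝ {x : Fin n → ℝ | ∃ i < n, ∃ v : Fin m → ℝ, x = (A ^ i) *ᵥ (B *ᵥ v)} = ⊤) :
    ∃ K : ℝ, 0 < K ∧ ∀ z : Fin n → ℝ, ∃ v : ℝ → Fin m → ℝ,
      Measurable v ∧ (∀ t, eNorm (v t) ≤ K * eNorm z) ∧
      (∫ t in Ioc (0:ℝ) 1, mexp (-(t • A)) *ᵥ (B *ᵥ v t)) = -z ∧
      (∫ t in Ioc (0:ℝ) 1, eNorm (v t)) ≤ K * eNorm z := by
  classical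
  -- the Gramian is bijective
  have hinj : Function.Injective (Gram A B).mulVecLin := by
    intro a b hab
    have h : Gram A B *ᵥ (a - b) = 0 := by
      have := sub_eq_zero_of_eq hab
      rw [← map_sub] at this
      simpa [Matrix.mulVecLin_apply] using this
    have := gram_inj A B hK h
    exact sub_eq_zero.mp this
  have hsurj : Function.Surjective (Gram A B).mulVecLin :=
    LinearMap.injective_iff_surjective.mp hinj
  let e : (Fin n → ℝ) ≃ₗ[ℝ] (Fin n → ℝ) := LinearEquiv.ofBijective _ ⟨hinj, hsurj⟩
  let L := LinearMap.toContinuousLinearMap (e.symm : (Fin n → ℝ) →ₗ[ℝ] (Fin n → ℝ))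
  set C₁ := ‖L‖ with hC₁
  have hC₁nn : 0 ≤ C₁ := norm_nonneg _
  -- bound on entries of `Mt` over `[0,1]`
  set g : ℝ → ℝ := fun t => ∑ j, ∑ i, |Mt A B t i j| with hg
  have hgc : Continuous g := by
    refine continuous_finset_sum _ fun j _ => continuous_finset_sum _ fun i _ => ?_
    exact (continuous_Mt_entry A B i j).abs
  obtain ⟨C₂, hC₂⟩ := isCompact_Icc.exists_bound_of_continuousOn
    (s := Icc (0:ℝ) 1) hgc.continuousOn
  set K := C₂ * C₁ + 1 with hKdef
  have hgnn : ∀ t, 0 ≤ g t :=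
    fun t => Finset.sum_nonneg fun j _ => Finset.sum_nonneg fun i _ => abs_nonneg _
  have hC₂nn : 0 ≤ C₂ :=
    le_trans (hgnn 0) (le_trans (le_abs_self _) (by simpa using hC₂ 0 (by norm_num)))
  have hKpos : 0 < K := by positivity
  refine ⟨K, hKpos, fun z => ?_⟩
  set y := e.symm (-z) with hy
  have hyn : ‖y‖ ≤ C₁ * eNorm z := by
    have h1 : ‖L (-z)‖ ≤ C₁ * ‖-z‖ := L.le_opNorm _
    have h2 : L (-z) = y := rfl
    rw [h2, norm_neg] at h1
    exact le_trans h1 (by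
      have := norm_le_eNorm z
      nlinarith [norm_nonneg z])
  set v : ℝ → Fin m → ℝ := fun t => if t ∈ Ioc (0:ℝ) 1 then (Mt A B t)ᵀ *ᵥ y else 0 with hv
  have hvm : Measurable v := by
    refine Measurable.ite measurableSet_Ioc ?_ measurable_const
    exact (continuous_MtT_z A B y).measurable
  have hvb : ∀ t, eNorm (v t) ≤ K * eNorm z := by
    intro t
    by_cases htm : t ∈ Ioc (0:ℝ) 1
    · have hv1 : v t = (Mt A B t)ᵀ *ᵥ y := by rw [hv]; simp [htm]
      have hcomp : ∀ j, |((Mt A B t)ᵀ *ᵥ y) j| ≤ (∑ i, |Mt A B t i j|) * ‖y‖ := by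
        intro j
        calc |((Mt A B t)ᵀ *ᵥ y) j| = |∑ i, Mt A B t i j * y i| := by
              simp [Matrix.mulVec, dotProduct, Matrix.transpose_apply]
          _ ≤ ∑ i, |Mt A B t i j * y i| := Finset.abs_sum_le_sum_abs _ _
          _ ≤ ∑ i, |Mt A B t i j| * ‖y‖ := by
              refine Finset.sum_le_sum fun i _ => ?_
              rw [abs_mul]
              exact mul_le_mul_of_nonneg_left
                (by rw [← Real.norm_eq_abs]; exact norm_le_pi_norm y i) (abs_nonneg _)
          _ = (∑ i, |Mt A B t i j|) * ‖y‖ := by rw [Finset.sum_mul]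
      have h2 : eNorm (v t) ≤ g t * ‖y‖ := by
        calc eNorm (v t) ≤ ∑ j, |v t j| := eNorm_le_sum _
          _ ≤ ∑ j, (∑ i, |Mt A B t i j|) * ‖y‖ := by
              refine Finset.sum_le_sum fun j _ => ?_
              rw [hv1]; exact hcomp j
          _ = g t * ‖y‖ := by rw [hg]; rw [Finset.sum_mul]
      have h3 : g t ≤ C₂ := by
        have := hC₂ t (Ioc_subset_Icc_self htm)
        rwa [Real.norm_eq_abs, abs_of_nonneg (hgnn t)] at this
      calc eNorm (v t) ≤ g t * ‖y‖ := h2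
        _ ≤ C₂ * (C₁ * eNorm z) := by
            have := norm_nonneg y
            nlinarith
        _ ≤ K * eNorm z := by
            rw [hKdef]
            nlinarith [eNorm_nonneg z]
    · have hv0 : v t = 0 := by rw [hv]; simp [htm]
      rw [hv0]
      have : eNorm (0 : Fin m → ℝ) = 0 := by simp [eNorm]
      rw [this]
      exact mul_nonneg hKpos.le (eNorm_nonneg z)
  refine ⟨v, hvm, hvb, ?_, ?_⟩
  · -- steering identity
    have hcong : ∀ t ∈ Ioc (0:ℝ) 1,
        mexp (-(t • A)) *ᵥ (B *ᵥ v t) = (Mt A B t * (Mt A B t)ᵀ) *ᵥ y := by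
      intro t htm
      have hv1 : v t = (Mt A B t)ᵀ *ᵥ y := by rw [hv]; simp [htm]
      rw [hv1, show -(t • A) = t • (-A) from (smul_neg t A).symm]
      rw [Matrix.mulVec_mulVec, Matrix.mulVec_mulVec]
      rfl
    rw [setIntegral_congr_fun measurableSet_Ioc hcong, ← Gram_mulVec]
    show (Gram A B).mulVecLin y = -z
    rw [hy]
    exact e.apply_symm_apply (-z)
  · -- cost bound
    have hint : IntegrableOn (fun t => eNorm (v t)) (Ioc (0:ℝ) 1) := by
      refine integrableOn_of_bound measurableSet_Ioc (by simp [Real.volume_Ioc]) ?_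
        (K * eNorm z) ?_
      · exact (continuous_eNorm.measurable.comp hvm).aestronglyMeasurable
      · intro t _
        rw [Real.norm_eq_abs, abs_of_nonneg (eNorm_nonneg _)]
        exact hvb t
    calc ∫ t in Ioc (0:ℝ) 1, eNorm (v t)
        ≤ ∫ _ in Ioc (0:ℝ) 1, K * eNorm z := by
          refine setIntegral_mono_on hint ((integrableOn_const_iff (C := K * eNorm z)).mpr ?_) measurableSet_Ioc
            fun t _ => hvb t
          right; simp [Real.volume_Ioc]
      _ = K * eNorm z := by simp [Real.volume_Ioc]


/-! ### Integrand basics -/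

lemma F_eq (A : Matrix (Fin n) (Fin n) ℝ) (B : Matrix (Fin n) (Fin m) ℝ)
    (u : ℝ → Fin m → ℝ) (t : ℝ) :
    mexp (-(t • A)) *ᵥ (B *ᵥ u t) = Mt A B t *ᵥ u t := by
  rw [show -(t • A) = t • (-A) from (smul_neg t A).symm, Mt, ← Matrix.mulVec_mulVec]

lemma measurable_Fu (A : Matrix (Fin n) (Fin n) ℝ) (B : Matrix (Fin n) (Fin m) ℝ)
    {u : ℝ → Fin m → ℝ} (hu : Measurable u) :
    Measurable fun t => Mt A B t *ᵥ u t := by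
  refine measurable_pi_lambda _ fun i => ?_
  simp only [Matrix.mulVec, dotProduct]
  refine Finset.measurable_sum _ fun j _ => ?_
  exact ((continuous_Mt_entry A B i j).measurable).mul ((measurable_pi_apply j).comp hu)

lemma integrableOn_Fu (A : Matrix (Fin n) (Fin n) ℝ) (B : Matrix (Fin n) (Fin m) ℝ)
    {u : ℝ → Fin m → ℝ} (hum : Measurable u) {C : ℝ}
    (hub : ∀ t, eNorm (u t) ≤ C) (a b : ℝ) :
    IntegrableOn (fun t => mexp (-(t • A)) *ᵥ (B *ᵥ u t)) (Ioc a b) := by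
  by_cases hab : a ≤ b
  · simp only [F_eq A B u]
    set gg : ℝ → ℝ := fun t => ∑ i, ∑ j, |Mt A B t i j| with hgg
    have hggc : Continuous gg :=
      continuous_finset_sum _ fun i _ => continuous_finset_sum _ fun j _ =>
        (continuous_Mt_entry A B i j).abs
    obtain ⟨D, hD⟩ := isCompact_Icc.exists_bound_of_continuousOn
      (s := Icc a b) hggc.continuousOn
    have hggnn : ∀ t, 0 ≤ gg t :=
      fun t => Finset.sum_nonneg fun i _ => Finset.sum_nonneg fun j _ => abs_nonneg _
    have hDnn : 0 ≤ D := le_trans (hggnn a)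
      (le_trans (le_abs_self _) (by simpa using hD a (left_mem_Icc.mpr hab)))
    set C' := max C 0 with hC'
    refine integrableOn_of_bound measurableSet_Ioc measure_Ioc_lt_top
      ((measurable_Fu A B hum).aestronglyMeasurable) (D * C') ?_
    intro t ht
    refine (pi_norm_le_iff_of_nonneg (by positivity)).mpr fun i => ?_
    have hcomp : |(Mt A B t *ᵥ u t) i| ≤ (∑ j, |Mt A B t i j|) * C' := by
      calc |(Mt A B t *ᵥ u t) i| = |∑ j, Mt A B t i j * u t j| := by
            simp [Matrix.mulVec, dotProduct]
        _ ≤ ∑ j, |Mt A B t i j * u t j| := Finset.abs_sum_le_sum_abs _ _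
        _ ≤ ∑ j, |Mt A B t i j| * C' := by
            refine Finset.sum_le_sum fun j _ => ?_
            rw [abs_mul]
            refine mul_le_mul_of_nonneg_left ?_ (abs_nonneg _)
            exact le_trans (abs_le_eNorm (u t) j) (le_trans (hub t) (le_max_left _ _))
        _ = (∑ j, |Mt A B t i j|) * C' := by rw [Finset.sum_mul]
    have hrow : (∑ j, |Mt A B t i j|) ≤ gg t :=
      Finset.single_le_sum (f := fun i => ∑ j, |Mt A B t i j|)
        (fun i _ => Finset.sum_nonneg fun j _ => abs_nonneg _) (Finset.mem_univ i)
    have hgt : gg t ≤ D := by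
      have := hD t (Icc_subset_Icc_left le_rfl (Ioc_subset_Icc_self ht))
      rwa [Real.norm_eq_abs, abs_of_nonneg (hggnn t)] at this
    rw [Real.norm_eq_abs]
    calc |(Mt A B t *ᵥ u t) i| ≤ (∑ j, |Mt A B t i j|) * C' := hcomp
      _ ≤ D * C' := by
          refine mul_le_mul_of_nonneg_right (le_trans hrow hgt) ?_
          positivity
  · rw [Set.Ioc_eq_empty (by intro h; exact hab h.le)]
    exact integrableOn_empty

lemma integrableOn_eNorm_u {u : ℝ → Fin m → ℝ} (hum : Measurable u) {C : ℝ}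
    (hub : ∀ t, eNorm (u t) ≤ C) (a b : ℝ) :
    IntegrableOn (fun t => eNorm (u t)) (Ioc a b) := by
  refine integrableOn_of_bound measurableSet_Ioc measure_Ioc_lt_top
    ((continuous_eNorm.measurable.comp hum).aestronglyMeasurable) C ?_
  intro t _
  rw [Real.norm_eq_abs, abs_of_nonneg (eNorm_nonneg _)]
  exact hub t

lemma shift_integral {E : Type*} [NormedAddCommGroup E] [NormedSpace ℝ E]
    (f : ℝ → E) (T : ℝ) :
    ∫ t in Ioc T (T+1), f t = ∫ t in Ioc (0:ℝ) 1, f (t + T) := by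
  have h := intervalIntegral.integral_comp_add_right (a := (0:ℝ)) (b := 1) f T
  rw [zero_add, add_comm (1:ℝ) T] at h
  rw [← intervalIntegral.integral_of_le (by linarith : T ≤ T + 1),
    ← intervalIntegral.integral_of_le (zero_le_one), ← h]

/-! ### Extension by zero -/

lemma extend_mem {A : Matrix (Fin n) (Fin n) ℝ} {B : Matrix (Fin n) (Fin m) ℝ}
    {x₀ : Fin n → ℝ} {T : ℝ} {u : ℝ → Fin m → ℝ} (hT : 0 < T)
    (hu : Admissible u) (hs : Steers A B x₀ T u) :
    ∃ u0 : ℝ → Fin m → ℝ, Admissible u0 ∧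
      IntegrableOn (fun t => eNorm (u0 t)) (Ioi (0:ℝ)) ∧
      Tendsto (traj A B x₀ u0) atTop (nhds 0) ∧
      (∫ t in Ioi (0:ℝ), eNorm (u0 t)) = costJ T u := by
  classical
  set u0 : ℝ → Fin m → ℝ := fun t => if t ≤ T then u t else 0 with hu0
  have hm : Measurable u0 := Measurable.ite measurableSet_Iic hu.1 measurable_const
  have hb : ∀ t, eNorm (u0 t) ≤ 1 := by
    intro t
    by_cases h : t ≤ T
    · simp only [hu0, if_pos h]; exact hu.2 t
    · simp only [hu0, if_neg h]
      rw [show eNorm (0 : Fin m → ℝ) = 0 from by simp [eNorm]]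
      exact zero_le_one
  have hadm : Admissible u0 := ⟨hm, hb⟩
  have hioi : Ioc (0:ℝ) T ∪ Ioi T = Ioi 0 := Ioc_union_Ioi_eq_Ioi hT.le
  have hzero_tail : ∀ t ∈ Ioi T, eNorm (u0 t) = 0 := by
    intro t ht
    simp only [hu0, if_neg (not_le.mpr (show T < t from ht))]
    simp [eNorm]
  have hint1 : IntegrableOn (fun t => eNorm (u0 t)) (Ioc (0:ℝ) T) :=
    integrableOn_eNorm_u hm hb 0 T
  have hint2 : IntegrableOn (fun t => eNorm (u0 t)) (Ioi T) := by
    exact IntegrableOn.congr_fun integrableOn_zero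
      (fun t ht => (hzero_tail t ht).symm) measurableSet_Ioi
  have hint : IntegrableOn (fun t => eNorm (u0 t)) (Ioi (0:ℝ)) := by
    rw [← hioi]; exact hint1.union hint2
  have heqT : ∀ τ ∈ Ioc (0:ℝ) T, eNorm (u0 τ) = eNorm (u τ) := by
    intro τ hτ
    simp only [hu0, if_pos hτ.2]
  have hcost : (∫ t in Ioi (0:ℝ), eNorm (u0 t)) = costJ T u := by
    rw [← hioi, setIntegral_union (Ioc_disjoint_Ioi le_rfl) measurableSet_Ioi hint1 hint2]
    rw [setIntegral_congr_fun measurableSet_Ioc heqT,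
      setIntegral_congr_fun measurableSet_Ioi hzero_tail]
    simp [costJ]
  have htraj0 : ∀ t, T ≤ t → traj A B x₀ u0 t = 0 := by
    intro t ht
    have hsplit : Ioc (0:ℝ) t = Ioc (0:ℝ) T ∪ Ioc T t := (Ioc_union_Ioc_eq_Ioc hT.le ht).symm
    have hi1 : IntegrableOn (fun τ => mexp (-(τ • A)) *ᵥ (B *ᵥ u0 τ)) (Ioc (0:ℝ) T) :=
      integrableOn_Fu A B hm hb 0 T
    have hi2 : IntegrableOn (fun τ => mexp (-(τ • A)) *ᵥ (B *ᵥ u0 τ)) (Ioc T t) :=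
      integrableOn_Fu A B hm hb T t
    have hseg2 : (∫ τ in Ioc T t, mexp (-(τ • A)) *ᵥ (B *ᵥ u0 τ)) = 0 := by
      rw [setIntegral_congr_fun (g := fun _ => (0 : Fin n → ℝ)) measurableSet_Ioc ?_]
      · exact integral_zero _ _
      · intro τ hτ
        simp only [hu0, if_neg (not_le.mpr hτ.1)]
        simp [Matrix.mulVec_zero]
    have hseg1 : (∫ τ in Ioc (0:ℝ) T, mexp (-(τ • A)) *ᵥ (B *ᵥ u0 τ))
        = ∫ τ in Ioc (0:ℝ) T, mexp (-(τ • A)) *ᵥ (B *ᵥ u τ) := by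
      refine setIntegral_congr_fun measurableSet_Ioc fun τ hτ => ?_
      simp only [hu0, if_pos hτ.2]
    have hic : x₀ + ∫ τ in Ioc (0:ℝ) t, mexp (-(τ • A)) *ᵥ (B *ᵥ u0 τ) = 0 := by
      rw [hsplit, setIntegral_union (Ioc_disjoint_Ioc.mpr (le_trans inf_le_left le_sup_right))
        measurableSet_Ioc hi1 hi2]
      rw [hseg1, hseg2, add_zero]
      exact hs
    unfold traj
    rw [hic, Matrix.mulVec_zero]
  refine ⟨u0, hadm, hint, ?_, hcost⟩
  refine Tendsto.congr' ?_ tendsto_const_nhds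
  filter_upwards [eventually_ge_atTop T] with t ht
  exact (htraj0 t ht).symm

/-! ### Concatenation -/

lemma concat_lemma {A : Matrix (Fin n) (Fin n) ℝ} {B : Matrix (Fin n) (Fin m) ℝ}
    {x₀ : Fin n → ℝ} {T : ℝ} {u v : ℝ → Fin m → ℝ} (hT : 0 < T)
    (hu : Admissible u) (hvm : Measurable v) (hvb : ∀ t, eNorm (v t) ≤ 1)
    (hvst : (∫ t in Ioc (0:ℝ) 1, mexp (-(t • A)) *ᵥ (B *ᵥ v t)) = -(traj A B x₀ u T)) :
    Admissible (fun t => if t ≤ T then u t else v (t - T)) ∧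
    Steers A B x₀ (T+1) (fun t => if t ≤ T then u t else v (t - T)) ∧
    costJ (T+1) (fun t => if t ≤ T then u t else v (t - T))
      = costJ T u + ∫ t in Ioc (0:ℝ) 1, eNorm (v t) := by
  classical
  set w : ℝ → Fin m → ℝ := fun t => if t ≤ T then u t else v (t - T) with hw
  have hwm : Measurable w := by
    refine Measurable.ite measurableSet_Iic hu.1 ?_
    exact hvm.comp (measurable_id.sub measurable_const)
  have hwb : ∀ t, eNorm (w t) ≤ 1 := by
    intro t
    by_cases h : t ≤ T
    · simp only [hw, if_pos h]; exact hu.2 t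
    · simp only [hw, if_neg h]; exact hvb _
  have hadm : Admissible w := ⟨hwm, hwb⟩
  have hi1 : IntegrableOn (fun τ => mexp (-(τ • A)) *ᵥ (B *ᵥ w τ)) (Ioc (0:ℝ) T) :=
    integrableOn_Fu A B hwm hwb 0 T
  have hi2 : IntegrableOn (fun τ => mexp (-(τ • A)) *ᵥ (B *ᵥ w τ)) (Ioc T (T+1)) :=
    integrableOn_Fu A B hwm hwb T (T+1)
  have hsplit : Ioc (0:ℝ) (T+1) = Ioc (0:ℝ) T ∪ Ioc T (T+1) :=
    (Ioc_union_Ioc_eq_Ioc hT.le (by linarith)).symm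
  -- second segment
  have hseg2 : (∫ τ in Ioc T (T+1), mexp (-(τ • A)) *ᵥ (B *ᵥ w τ))
      = mexp (T • (-A)) *ᵥ (-(traj A B x₀ u T)) := by
    have hcong : ∀ τ ∈ Ioc T (T+1),
        mexp (-(τ • A)) *ᵥ (B *ᵥ w τ) = mexp (-(τ • A)) *ᵥ (B *ᵥ v (τ - T)) := by
      intro τ hτ
      simp only [hw, if_neg (not_le.mpr hτ.1)]
    rw [setIntegral_congr_fun measurableSet_Ioc hcong]
    rw [shift_integral (fun τ => mexp (-(τ • A)) *ᵥ (B *ᵥ v (τ - T))) T]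
    have hpt : ∀ σ ∈ Ioc (0:ℝ) 1, mexp (-((σ + T) • A)) *ᵥ (B *ᵥ v (σ + T - T))
        = mexp (T • (-A)) *ᵥ (mexp (-(σ • A)) *ᵥ (B *ᵥ v σ)) := by
      intro σ _
      rw [add_sub_cancel_right,
        show -((σ + T) • A) = (T + σ) • (-A) from by rw [smul_neg, add_comm σ T],
        mexp_add, ← Matrix.mulVec_mulVec,
        show -(σ • A) = σ • (-A) from (smul_neg _ _).symm]
    rw [setIntegral_congr_fun measurableSet_Ioc hpt]
    have hintv : IntegrableOn (fun σ => mexp (-(σ • A)) *ᵥ (B *ᵥ v σ)) (Ioc (0:ℝ) 1) :=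
      integrableOn_Fu A B hvm hvb 0 1
    rw [← mulVec_integral (mexp (T • (-A))) hintv, hvst]
  have hseg1 : (∫ τ in Ioc (0:ℝ) T, mexp (-(τ • A)) *ᵥ (B *ᵥ w τ))
      = ∫ τ in Ioc (0:ℝ) T, mexp (-(τ • A)) *ᵥ (B *ᵥ u τ) := by
    refine setIntegral_congr_fun measurableSet_Ioc fun τ hτ => ?_
    simp only [hw, if_pos hτ.2]
  have hcancel : mexp (T • (-A)) *ᵥ traj A B x₀ u T
      = x₀ + ∫ τ in Ioc (0:ℝ) T, mexp (-(τ • A)) *ᵥ (B *ᵥ u τ) := by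
    unfold traj
    rw [show (T • (-A) : Matrix (Fin n) (Fin n) ℝ) = -(T • A) from smul_neg _ _]
    exact mexp_cancel A T _
  have hsteers : Steers A B x₀ (T+1) w := by
    unfold Steers
    rw [hsplit,
      setIntegral_union (Ioc_disjoint_Ioc.mpr (le_trans inf_le_left le_sup_right)) measurableSet_Ioc hi1 hi2,
      hseg1, hseg2, Matrix.mulVec_neg, hcancel]
    abel
  -- cost
  have hc1 : IntegrableOn (fun t => eNorm (w t)) (Ioc (0:ℝ) T) :=
    integrableOn_eNorm_u hwm hwb 0 T
  have hc2 : IntegrableOn (fun t => eNorm (w t)) (Ioc T (T+1)) :=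
    integrableOn_eNorm_u hwm hwb T (T+1)
  have hcost : costJ (T+1) w = costJ T u + ∫ t in Ioc (0:ℝ) 1, eNorm (v t) := by
    unfold costJ
    rw [hsplit,
      setIntegral_union (Ioc_disjoint_Ioc.mpr (le_trans inf_le_left le_sup_right)) measurableSet_Ioc hc1 hc2]
    congr 1
    · refine setIntegral_congr_fun measurableSet_Ioc fun τ hτ => ?_
      simp only [hw, if_pos hτ.2]
    · have hcong : ∀ τ ∈ Ioc T (T+1), eNorm (w τ) = eNorm (v (τ - T)) := by
        intro τ hτ
        simp only [hw, if_neg (not_le.mpr hτ.1)]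
      rw [setIntegral_congr_fun measurableSet_Ioc hcong,
        shift_integral (fun τ => eNorm (v (τ - T))) T]
      refine setIntegral_congr_fun measurableSet_Ioc fun σ _ => ?_
      rw [add_sub_cancel_right]
  exact ⟨hadm, hsteers, hcost⟩

end Stmt13Aux

open Stmt13Aux

theorem stmt13 {n m : ℕ} (A : Matrix (Fin n) (Fin n) ℝ) (B : Matrix (Fin n) (Fin m) ℝ)
    (hK : Kalman A B) (x₀ : Fin n → ℝ)
    (hx₀ : ∃ T : ℝ, 0 < T ∧ ∃ u : ℝ → Fin m → ℝ, Admissible u ∧ Steers A B x₀ T u) :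
    muInf A B x₀ =
      sInf {c : ℝ | ∃ T : ℝ, 0 < T ∧
        (∃ u : ℝ → Fin m → ℝ, Admissible u ∧ Steers A B x₀ T u) ∧ c = muT A B T x₀} := by
  classical
  obtain ⟨T₀, hT₀, u₀, hu₀, hs₀⟩ := hx₀
  set MuSet := {c : ℝ | ∃ u : ℝ → Fin m → ℝ, Admissible u ∧
      IntegrableOn (fun t => eNorm (u t)) (Ioi (0:ℝ)) ∧
      Tendsto (traj A B x₀ u) atTop (nhds 0) ∧
      c = ∫ t in Ioi (0:ℝ), eNorm (u t)} with hMuSet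
  set RHS := {c : ℝ | ∃ T : ℝ, 0 < T ∧
      (∃ u : ℝ → Fin m → ℝ, Admissible u ∧ Steers A B x₀ T u) ∧ c = muT A B T x₀} with hRHS
  have hmuT_nonneg : ∀ T : ℝ, 0 ≤ muT A B T x₀ := by
    intro T
    refine Real.sInf_nonneg ?_
    rintro c ⟨u, _, _, rfl⟩
    exact setIntegral_nonneg measurableSet_Ioc fun t _ => eNorm_nonneg _
  have hbddRHS : BddBelow RHS := by
    refine ⟨0, ?_⟩
    rintro c ⟨T, _, _, rfl⟩
    exact hmuT_nonneg T
  have hbddMu : BddBelow MuSet := by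
    refine ⟨0, ?_⟩
    rintro c ⟨u, _, _, _, rfl⟩
    exact setIntegral_nonneg measurableSet_Ioi fun t _ => eNorm_nonneg _
  obtain ⟨w₀, hw₀adm, hw₀int, hw₀traj, hw₀cost⟩ := extend_mem hT₀ hu₀ hs₀
  have hMuNe : MuSet.Nonempty := ⟨_, w₀, hw₀adm, hw₀int, hw₀traj, rfl⟩
  have hRHSNe : RHS.Nonempty := ⟨muT A B T₀ x₀, T₀, hT₀, ⟨u₀, hu₀, hs₀⟩, rfl⟩
  show sInf MuSet = sInf RHS
  apply le_antisymm
  · -- muInf ≤ sInf RHS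
    refine le_csInf hRHSNe ?_
    rintro c ⟨T, hT, ⟨u', hu', hs'⟩, rfl⟩
    refine le_csInf ⟨costJ T u', u', hu', hs', rfl⟩ ?_
    rintro j ⟨u, hu, hsteer, rfl⟩
    obtain ⟨u0, h1, h2, h3, h4⟩ := extend_mem hT hu hsteer
    exact csInf_le hbddMu ⟨u0, h1, h2, h3, h4.symm⟩
  · -- sInf RHS ≤ muInf
    refine le_csInf hMuNe ?_
    rintro c ⟨u, hu, huint, htraj, rfl⟩
    refine le_of_forall_sub_le fun ε hε => ?_
    rw [sub_le_iff_le_add]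
    rw [add_comm]
    obtain ⟨K, hKpos, hsteerK⟩ := steer_aux A B hK
    -- choose T
    have htraj' : Tendsto (fun t => eNorm (traj A B x₀ u t)) atTop (nhds 0) := by
      have h0 : eNorm (0 : Fin n → ℝ) = 0 := by simp [eNorm]
      have := (continuous_eNorm.tendsto (0 : Fin n → ℝ)).comp htraj
      rwa [h0] at this
    set δ := min (1/K) (ε/K) with hδdef
    have hδpos : 0 < δ := lt_min (by positivity) (by positivity)
    have hev : ∀ᶠ T in atTop, eNorm (traj A B x₀ u T) < δ :=
      htraj'.eventually_lt_const hδpos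
    obtain ⟨T, hTz, hT1⟩ := (hev.and (eventually_ge_atTop 1)).exists
    have hTpos : (0:ℝ) < T := lt_of_lt_of_le one_pos hT1
    obtain ⟨v, hvm, hvb, hvst, hvcost⟩ := hsteerK (traj A B x₀ u T)
    have hKz_le_one : K * eNorm (traj A B x₀ u T) ≤ 1 := by
      have h1 : eNorm (traj A B x₀ u T) ≤ 1/K := le_trans hTz.le (min_le_left _ _)
      calc K * eNorm (traj A B x₀ u T) ≤ K * (1/K) :=
            mul_le_mul_of_nonneg_left h1 hKpos.le
        _ = 1 := by field_simp
    have hKz_le_eps : K * eNorm (traj A B x₀ u T) ≤ ε := by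
      have h1 : eNorm (traj A B x₀ u T) ≤ ε/K := le_trans hTz.le (min_le_right _ _)
      calc K * eNorm (traj A B x₀ u T) ≤ K * (ε/K) :=
            mul_le_mul_of_nonneg_left h1 hKpos.le
        _ = ε := by field_simp
    have hvb1 : ∀ t, eNorm (v t) ≤ 1 := fun t => le_trans (hvb t) hKz_le_one
    obtain ⟨hwadm, hwsteers, hwcost⟩ := concat_lemma hTpos hu hvm hvb1 hvst
    have hcost_tail : costJ T u ≤ ∫ t in Ioi (0:ℝ), eNorm (u t) := by
      refine setIntegral_mono_set huint ?_ ?_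
      · exact Eventually.of_forall fun t => eNorm_nonneg _
      · exact HasSubset.Subset.eventuallyLE Ioc_subset_Ioi_self
    have hfinal : costJ (T+1) (fun t => if t ≤ T then u t else v (t - T))
        ≤ (∫ t in Ioi (0:ℝ), eNorm (u t)) + ε := by
      rw [hwcost]
      have h2 := le_trans hvcost hKz_le_eps
      linarith
    have h5 : sInf RHS ≤ muT A B (T+1) x₀ :=
      csInf_le hbddRHS ⟨T+1, by linarith, ⟨_, hwadm, hwsteers⟩, rfl⟩
    have h6 : muT A B (T+1) x₀ ≤ costJ (T+1) (fun t => if t ≤ T then u t else v (t - T)) := by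
      refine csInf_le ⟨0, ?_⟩ ⟨_, hwadm, hwsteers, rfl⟩
      rintro c' ⟨u'', _, _, rfl⟩
      exact setIntegral_nonneg measurableSet_Ioc fun t _ => eNorm_nonneg _
    linarith
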